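/- arXiv:2301.09020 — 2 statements merged into one kernel-verified Lean document; each statement's English description precedes it below -/
import Mathlib

section
/- (Left-limit form of Gill's identity.) For every real t > 0, Ŝ_PL(t−) · K̂(t−) = Y(t)/n. -/
open Finset
open scoped Classical

noncomputable section

namespace SurvStmt

/-- The finite set of distinct observed times `{X_1, …, X_n}`. -/
def times {n : ℕ} (X : Fin n → ℝ) : Finset ℝ := Finset.image X Finset.univ

/-- `Y(t) = #{i : X_i ≥ t}`, as a real number. -/
def Yat {n : ℕ} (X : Fin n → ℝ) (t : ℝ) : ℝ :=
  ((Finset.univ.filter (fun i => t ≤ X i)).card : ℝ)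

/-- `Y(t+) = #{i : X_i > t}`, as a real number. -/
def Yplus {n : ℕ} (X : Fin n → ℝ) (t : ℝ) : ℝ :=
  ((Finset.univ.filter (fun i => t < X i)).card : ℝ)

/-- `ΔN(t) = #{i : X_i = t, D_i = 1}`, as a real number. -/
def dN {n : ℕ} (X : Fin n → ℝ) (D : Fin n → Bool) (t : ℝ) : ℝ :=
  ((Finset.univ.filter (fun i => X i = t ∧ D i = true)).card : ℝ)

/-- `ΔC(t) = #{i : X_i = t, D_i = 0}`, as a real number. -/
def dC {n : ℕ} (X : Fin n → ℝ) (D : Fin n → Bool) (t : ℝ) : ℝ :=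
  ((Finset.univ.filter (fun i => X i = t ∧ D i = false)).card : ℝ)

/-- `Y†(t) = Y(t) − ΔN(t)`. -/
def Ydag {n : ℕ} (X : Fin n → ℝ) (D : Fin n → Bool) (t : ℝ) : ℝ :=
  Yat X t - dN X D t

/-- `τ = max_i X_i`, the largest observation time (0 if there is no data). -/
def tau {n : ℕ} (X : Fin n → ℝ) : ℝ := WithBot.unbotD 0 ((times X).max)

/-- Censoring product-limit estimator `K̂(t) = ∏_{u ≤ t} (1 − ΔC(u)/Y†(u))`. -/
def Khat {n : ℕ} (X : Fin n → ℝ) (D : Fin n → Bool) (t : ℝ) : ℝ :=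
  ∏ u ∈ (times X).filter (fun u => u ≤ t), (1 - dC X D u / Ydag X D u)

/-- Left limit `K̂(t−) = ∏_{u < t} (1 − ΔC(u)/Y†(u))`. -/
def Kminus {n : ℕ} (X : Fin n → ℝ) (D : Fin n → Bool) (t : ℝ) : ℝ :=
  ∏ u ∈ (times X).filter (fun u => u < t), (1 - dC X D u / Ydag X D u)

/-- Failure product-limit estimator `Ŝ_PL(t) = ∏_{u ≤ t} (1 − ΔN(u)/Y(u))`. -/
def SPL {n : ℕ} (X : Fin n → ℝ) (D : Fin n → Bool) (t : ℝ) : ℝ :=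
  ∏ u ∈ (times X).filter (fun u => u ≤ t), (1 - dN X D u / Yat X u)

/-- Left limit `Ŝ_PL(t−) = ∏_{u < t} (1 − ΔN(u)/Y(u))`. -/
def SPLminus {n : ℕ} (X : Fin n → ℝ) (D : Fin n → Bool) (t : ℝ) : ℝ :=
  ∏ u ∈ (times X).filter (fun u => u < t), (1 - dN X D u / Yat X u)

/-- IPCW estimator `F̂_IPCW(t) = (1/n) ∑_i D_i 1{X_i ≤ t} / K̂(X_i−)`. -/
def FIPCW {n : ℕ} (X : Fin n → ℝ) (D : Fin n → Bool) (t : ℝ) : ℝ :=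
  (1 / (n : ℝ)) * ∑ i : Fin n,
    (if D i = true then (1 : ℝ) else 0) * (if X i ≤ t then (1 : ℝ) else 0) / Kminus X D (X i)

/-- IPCW survival estimator `S̃_IPCW(t) = (1/n) ∑_i D_i 1{X_i > t} / K̂(X_i−)`. -/
def SIPCW {n : ℕ} (X : Fin n → ℝ) (D : Fin n → Bool) (t : ℝ) : ℝ :=
  (1 / (n : ℝ)) * ∑ i : Fin n,
    (if D i = true then (1 : ℝ) else 0) * (if t < X i then (1 : ℝ) else 0) / Kminus X D (X i)

/-- RTTR jump weight `J(v) = 1/(n · K̂(v−))`. -/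
def Jw {n : ℕ} (X : Fin n → ℝ) (D : Fin n → Bool) (v : ℝ) : ℝ :=
  1 / ((n : ℝ) * Kminus X D v)

/-- Redistribute-to-the-right estimator
`Ŝ_RTTR(t) = 1 − ∑_{v ≤ t} [J(v) ΔN(v) 1{v < τ} + J(τ) Y(τ) 1{v = τ}]`. -/
def SRTTR {n : ℕ} (X : Fin n → ℝ) (D : Fin n → Bool) (t : ℝ) : ℝ :=
  1 - ∑ v ∈ (times X).filter (fun v => v ≤ t),
      (Jw X D v * dN X D v * (if v < tau X then (1 : ℝ) else 0)
        + Jw X D (tau X) * Yat X (tau X) * (if v = tau X then (1 : ℝ) else 0))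

/-!
At an observed time `u` the failure factor `1 - ΔN/Y` removes the failures from the risk set
and the censoring factor `1 - ΔC/Y†` then removes the censored observations, so their product
is `Y(u+)/Y(u)`. Over the observed times `u < t` these ratios telescope: `Y(u+)` is `Y` at the
next observed time (or at `t`), and the risk set before the first observed time is everything,
of size `n`.
-/

theorem one_sub_div_mul_one_sub_div_eq {p d c : ℝ} (hp : 0 ≤ p) (hc : 0 ≤ c)
    (hy : p + d + c ≠ 0) :
    (1 - d / (p + d + c)) * (1 - c / (p + c)) = p / (p + d + c) := by
  rcases (add_nonneg hp hc).eq_or_lt with h | h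
  -- here the second factor is `1 - 0 / 0 = 1`
  · obtain ⟨rfl, rfl⟩ : p = 0 ∧ c = 0 := ⟨by linarith, by linarith⟩
    have hd : d ≠ 0 := by simpa using hy
    simp [hd]
  · field_simp
    ring

theorem prod_filter_lt_div_eq_div {s : Finset ℝ} {F G : ℝ → ℝ} {c : ℝ} (hc : c ≠ 0)
    (hF : ∀ u ∈ s, F u ≠ 0) (hbase : ∀ t, (∀ u ∈ s, t ≤ u) → F t = c)
    (hstep : ∀ a t, a < t → (∀ u ∈ s, u < t → u ≤ a) → G a = F t) (t : ℝ) :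
    ∏ u ∈ s.filter (fun u => u < t), G u / F u = F t / c := by
  suffices ∀ s', ∀ t, s.filter (fun u => u < t) = s' → ∏ u ∈ s', G u / F u = F t / c from
    this _ t rfl
  intro s'
  induction s' using Finset.induction_on_max with
  | empty =>
    intro t hs
    have hle : ∀ u ∈ s, t ≤ u := fun u hu => not_lt.mp fun hut =>
      Finset.notMem_empty u (hs ▸ Finset.mem_filter.mpr ⟨hu, hut⟩)
    rw [Finset.prod_empty, hbase t hle, div_self hc]
  | insert a s' hlt ih =>
    intro t hs
    have ha : a ∈ s ∧ a < t := Finset.mem_filter.mp (hs ▸ Finset.mem_insert_self a s')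
    have hbelow : ∀ u ∈ s, u < t → u = a ∨ u ∈ s' := fun u hu hut =>
      Finset.mem_insert.mp (hs ▸ Finset.mem_filter.mpr ⟨hu, hut⟩)
    have hs' : s.filter (fun u => u < a) = s' := by
      ext u
      simp only [Finset.mem_filter]
      refine ⟨fun ⟨hu, hua⟩ => ?_, fun hu => ?_⟩
      · exact (hbelow u hu (hua.trans ha.2)).resolve_left hua.ne
      · have := Finset.mem_filter.mp (hs ▸ Finset.mem_insert_of_mem hu)
        exact ⟨this.1, hlt u hu⟩
    have hGa : G a = F t := hstep a t ha.2 fun u hu hut =>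
      (hbelow u hu hut).elim le_of_eq fun h => (hlt u h).le
    rw [Finset.prod_insert fun h => (hlt a h).false, ih a hs', hGa]
    field_simp [hF a ha.1]

variable {n : ℕ} {X : Fin n → ℝ}

theorem mem_times (i : Fin n) : X i ∈ times X :=
  Finset.mem_image_of_mem X (Finset.mem_univ i)

theorem Yat_pos_of_mem_times {u : ℝ} (hu : u ∈ times X) : 0 < Yat X u := by
  obtain ⟨i, -, rfl⟩ := Finset.mem_image.mp hu
  exact Nat.cast_pos.mpr (Finset.card_pos.mpr ⟨i, by simp⟩)

theorem Yat_eq_Yplus_add_dN_add_dC (D : Fin n → Bool) (u : ℝ) :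
    Yat X u = Yplus X u + dN X D u + dC X D u := by
  simp only [Yat, Yplus, dN, dC, Finset.card_filter]
  push_cast
  rw [← Finset.sum_add_distrib, ← Finset.sum_add_distrib]
  refine Finset.sum_congr rfl fun i _ => ?_
  rcases lt_trichotomy (X i) u with h | rfl | h
  · simp [h.ne, not_le.mpr h, not_lt.mpr h.le]
  · cases D i <;> simp
  · simp [h.ne', h.le, h]

theorem factor_eq_Yplus_div_Yat (D : Fin n → Bool) {u : ℝ} (hu : u ∈ times X) :
    (1 - dN X D u / Yat X u) * (1 - dC X D u / Ydag X D u) = Yplus X u / Yat X u := by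
  have hdag : Ydag X D u = Yplus X u + dC X D u := by
    rw [Ydag, Yat_eq_Yplus_add_dN_add_dC D]
    ring
  have hY : Yat X u ≠ 0 := (Yat_pos_of_mem_times hu).ne'
  rw [Yat_eq_Yplus_add_dN_add_dC D] at hY ⊢
  rw [hdag]
  exact one_sub_div_mul_one_sub_div_eq (Nat.cast_nonneg _) (Nat.cast_nonneg _) hY

theorem Yat_eq_of_forall_mem_times_le {t : ℝ} (ht : ∀ u ∈ times X, t ≤ u) :
    Yat X t = n := by
  rw [Yat, Finset.filter_true_of_mem fun i _ => ht (X i) (mem_times i), Finset.card_univ,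
    Fintype.card_fin]

theorem Yplus_eq_Yat_of_gap {a t : ℝ} (hat : a < t)
    (hgap : ∀ u ∈ times X, u < t → u ≤ a) : Yplus X a = Yat X t := by
  rw [Yplus, Yat]
  congr 2
  ext i
  simp only [Finset.mem_filter, Finset.mem_univ, true_and]
  exact ⟨fun h => not_lt.mp fun hit =>
    not_le.mpr h (hgap (X i) (mem_times i) hit), hat.trans_le⟩

theorem stmt5_general (n : ℕ) (hn : 0 < n) (X : Fin n → ℝ) (D : Fin n → Bool) :
    ∀ t : ℝ, 0 < t →
      SPLminus X D t * Kminus X D t = Yat X t / (n : ℝ) := by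
  intro t _
  rw [SPLminus, Kminus, ← Finset.prod_mul_distrib,
    Finset.prod_congr rfl fun u hu => factor_eq_Yplus_div_Yat D (Finset.mem_filter.mp hu).1]
  exact prod_filter_lt_div_eq_div (by positivity) (fun u hu => (Yat_pos_of_mem_times hu).ne')
    (fun _ => Yat_eq_of_forall_mem_times_le) (fun _ _ => Yplus_eq_Yat_of_gap) t

/-- left-limit Gill's identity: for every `t > 0`,
`Ŝ_PL(t−) · K̂(t−) = Y(t)/n`. -/
theorem stmt5 (n : ℕ) (hn : 0 < n) (X : Fin n → ℝ) (D : Fin n → Bool)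
    (hX : ∀ i, 0 < X i) :
    ∀ t : ℝ, 0 < t →
      SPLminus X D t * Kminus X D t = Yat X t / (n : ℝ) :=
  stmt5_general n hn X D

end SurvStmt
end
end

section
/- The IPCW weights sum to one exactly when all last observations are failures: (1/n) ∑_{i=1}^n D_i / K̂(X_i−) = 1 if and only if ΔN(τ) = Y(τ) (equivalently, ΔC(τ) = 0, i.e., every observation i with X_i = τ has D_i = 1). -/
open Finset
open scoped Classical

noncomputable section

namespace SurvStmt

lemma _root_.Finset.filter_le_eq_insert_filter_lt {α : Type*} [LinearOrder α] {s : Finset α} {u : α}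
    (hu : u ∈ s) : s.filter (· ≤ u) = insert u (s.filter (· < u)) := by
  ext v
  simp only [Finset.mem_filter, Finset.mem_insert, le_iff_lt_or_eq]
  constructor
  · rintro ⟨hv, hlt | rfl⟩
    exacts [Or.inr ⟨hv, hlt⟩, Or.inl rfl]
  · rintro (rfl | ⟨hv, hlt⟩)
    exacts [⟨hu, Or.inr rfl⟩, ⟨hv, Or.inl hlt⟩]

section Estimators

variable {n : ℕ} {X : Fin n → ℝ}

lemma mem_times_s12 {u : ℝ} : u ∈ times X ↔ ∃ i, X i = u := by
  simp [times]

lemma Yat_eq_dN_add_dC_add_Yplus (D : Fin n → Bool) (u : ℝ) :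
    Yat X u = dN X D u + dC X D u + Yplus X u := by
  simp only [Yat, dN, dC, Yplus, natCast_card_filter, ← sum_add_distrib]
  refine sum_congr rfl fun i _ => ?_
  rcases lt_trichotomy (X i) u with h | rfl | h
  · simp [h.ne, h.not_ge, h.not_gt]
  · cases D i <;> simp
  · simp [h, h.ne', h.le]

lemma Ydag_eq_dC_add_Yplus (D : Fin n → Bool) (u : ℝ) :
    Ydag X D u = dC X D u + Yplus X u := by
  rw [Ydag, Yat_eq_dN_add_dC_add_Yplus D]
  ring

lemma Yplus_pos_of_lt {u : ℝ} {i : Fin n} (h : u < X i) : 0 < Yplus X u := by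
  unfold Yplus
  exact_mod_cast card_pos.mpr ⟨i, by simpa using h⟩

lemma Ydag_pos_of_lt (D : Fin n → Bool) {u : ℝ} {i : Fin n} (h : u < X i) :
    0 < Ydag X D u := by
  rw [Ydag_eq_dC_add_Yplus]
  have : 0 ≤ dC X D u := by unfold dC; positivity
  linarith [Yplus_pos_of_lt h]

lemma one_sub_dC_div_Ydag_of_lt (D : Fin n → Bool) {u : ℝ} {i : Fin n} (h : u < X i) :
    1 - dC X D u / Ydag X D u = Yplus X u / Ydag X D u := by
  rw [eq_div_iff (Ydag_pos_of_lt D h).ne', sub_mul, div_mul_cancel₀ _ (Ydag_pos_of_lt D h).ne',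
    Ydag_eq_dC_add_Yplus]
  ring

lemma Kminus_pos (D : Fin n → Bool) {t : ℝ} {i : Fin n} (h : t ≤ X i) : 0 < Kminus X D t := by
  refine prod_pos fun u hu => ?_
  have hu : u < X i := (mem_filter.mp hu).2.trans_le h
  rw [one_sub_dC_div_Ydag_of_lt D hu]
  exact div_pos (Yplus_pos_of_lt hu) (Ydag_pos_of_lt D hu)

section Gap

variable {u t : ℝ} (hut : u < t) (hgap : ∀ v ∈ times X, v < t → v ≤ u)
include hut hgap

lemma filter_times_lt_eq_filter_le_of_gap : (times X).filter (· < t) = (times X).filter (· ≤ u) :=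
  filter_congr fun v hv => ⟨hgap v hv, fun h => h.trans_lt hut⟩

lemma Kminus_eq_mul_of_gap (D : Fin n → Bool) (hu : u ∈ times X) :
    Kminus X D t = Kminus X D u * (1 - dC X D u / Ydag X D u) := by
  rw [Kminus, Kminus, filter_times_lt_eq_filter_le_of_gap hut hgap,
    filter_le_eq_insert_filter_lt hu, prod_insert (by simp), mul_comm]

lemma Yat_eq_Yplus_of_gap : Yat X t = Yplus X u := by
  unfold Yat Yplus
  congr 2
  refine filter_congr fun i _ => ⟨hut.trans_le, fun h => not_lt.mp fun hit => ?_⟩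
  exact not_lt.mpr (hgap (X i) (mem_times_s12.mpr ⟨i, rfl⟩) hit) h

end Gap

lemma Yat_eq_of_filter_lt_eq_empty {t : ℝ} (h : (times X).filter (· < t) = ∅) : Yat X t = n := by
  rw [Yat, filter_true_of_mem, card_univ, Fintype.card_fin]
  exact fun i _ => not_lt.mp <| filter_eq_empty_iff.mp h (mem_times_s12.mpr ⟨i, rfl⟩)

lemma Kminus_eq_one_of_filter_lt_eq_empty (D : Fin n → Bool) {t : ℝ}
    (h : (times X).filter (· < t) = ∅) : Kminus X D t = 1 := by
  rw [Kminus, h, prod_empty]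

lemma sum_dN_div_Kminus_filter_lt (D : Fin n → Bool) {t : ℝ} {i : Fin n} (ht : t ≤ X i) :
    ∑ u ∈ (times X).filter (· < t), dN X D u / Kminus X D u = n - Yat X t / Kminus X D t := by
  induction hk : ((times X).filter (· < t)).card generalizing t with
  | zero =>
    have h := card_eq_zero.mp hk
    rw [h, sum_empty, Yat_eq_of_filter_lt_eq_empty h, Kminus_eq_one_of_filter_lt_eq_empty D h,
      div_one, sub_self]
  | succ k ih =>
    have hne : ((times X).filter (· < t)).Nonempty := card_pos.mp (by omega)
    obtain ⟨u, hu_mem, hu_max⟩ := exists_max_image _ id hne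
    obtain ⟨hu, hut⟩ := mem_filter.mp hu_mem
    have hgap : ∀ v ∈ times X, v < t → v ≤ u :=
      fun v hv hvt => hu_max v (mem_filter.mpr ⟨hv, hvt⟩)
    have hui : u < X i := hut.trans_le ht
    have hsplit : (times X).filter (· < t) = insert u ((times X).filter (· < u)) := by
      rw [filter_times_lt_eq_filter_le_of_gap hut hgap, filter_le_eq_insert_filter_lt hu]
    have hu_notMem : u ∉ (times X).filter (· < u) := by simp
    rw [hsplit, card_insert_of_notMem hu_notMem, Nat.succ_inj] at hk
    have hK := (Kminus_pos D hui.le).ne'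
    have hYdag := (Ydag_pos_of_lt D hui).ne'
    have hYplus := (Yplus_pos_of_lt hui).ne'
    rw [hsplit, sum_insert hu_notMem, ih hui.le hk, Yat_eq_Yplus_of_gap hut hgap,
      Kminus_eq_mul_of_gap hut hgap D hu, one_sub_dC_div_Ydag_of_lt D hui, Ydag]
    field_simp
    ring

lemma sum_indicator_div_Kminus_eq_sum_times (D : Fin n → Bool) :
    ∑ i, (if D i = true then (1 : ℝ) else 0) / Kminus X D (X i)
      = ∑ u ∈ times X, dN X D u / Kminus X D u := by
  rw [← sum_fiberwise_of_maps_to fun i _ => mem_times_s12.mpr ⟨i, rfl⟩]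
  refine sum_congr rfl fun u _ => ?_
  rw [sum_congr rfl fun i hi => by rw [(mem_filter.mp hi).2], ← sum_div, sum_boole,
    filter_filter]
  rfl

lemma tau_mem_times (hn : 0 < n) : tau X ∈ times X := by
  have hne : (times X).Nonempty := ⟨X ⟨0, hn⟩, mem_times_s12.mpr ⟨_, rfl⟩⟩
  rw [tau, ← coe_max' hne, WithBot.unbotD_coe]
  exact max'_mem _ _

lemma le_tau {u : ℝ} (hu : u ∈ times X) : u ≤ tau X := by
  rw [tau, ← coe_max' ⟨u, hu⟩, WithBot.unbotD_coe]
  exact le_max' _ _ hu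

lemma sum_times_dN_div_Kminus (hn : 0 < n) (D : Fin n → Bool) :
    ∑ u ∈ times X, dN X D u / Kminus X D u = n - Ydag X D (tau X) / Kminus X D (tau X) := by
  obtain ⟨i, hi⟩ := mem_times_s12.mp (tau_mem_times hn (X := X))
  rw [← filter_true_of_mem fun u => le_tau (X := X) (u := u),
    filter_le_eq_insert_filter_lt (tau_mem_times hn), sum_insert (by simp),
    sum_dN_div_Kminus_filter_lt D hi.ge, Ydag, sub_div]
  ring

end Estimators

theorem stmt12_general (n : ℕ) (hn : 0 < n) (X : Fin n → ℝ) (D : Fin n → Bool) :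
    ((1 / (n : ℝ)) * ∑ i : Fin n,
        (if D i = true then (1 : ℝ) else 0) / Kminus X D (X i) = 1)
      ↔ dN X D (tau X) = Yat X (tau X) := by
  obtain ⟨i, hi⟩ := mem_times_s12.mp (tau_mem_times hn (X := X))
  have hn' : (n : ℝ) ≠ 0 := by positivity
  rw [sum_indicator_div_Kminus_eq_sum_times, sum_times_dN_div_Kminus hn, one_div,
    inv_mul_eq_one₀ hn', eq_comm, sub_eq_self, div_eq_zero_iff,
    or_iff_left (Kminus_pos D hi.ge).ne', Ydag, sub_eq_zero]
  exact eq_comm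

/-- the IPCW weights sum to one iff all last observations are failures:
`(1/n) ∑_i D_i / K̂(X_i−) = 1 ↔ ΔN(τ) = Y(τ)`. -/
theorem stmt12 (n : ℕ) (hn : 0 < n) (X : Fin n → ℝ) (D : Fin n → Bool)
    (hX : ∀ i, 0 < X i) :
    ((1 / (n : ℝ)) * ∑ i : Fin n,
        (if D i = true then (1 : ℝ) else 0) / Kminus X D (X i) = 1)
      ↔ dN X D (tau X) = Yat X (tau X) :=
  stmt12_general n hn X D

end SurvStmt
end
end
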